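/- Let Q(z) = ∏ᵢ₌₁ⁿ (z − zᵢ) with n ≥ 2, and suppose there exists r > 0 such that: (i) |Q′(z₁)|·r/2 ≥ 1; (ii) for every 2 ≤ k ≤ n, |Q^{(k)}(z₁)|·r^k/k! < (1/(2n²))·|Q′(z₁)|·r; and (iii) min_{2 ≤ j ≤ n} |z₁ − z_j| > r. Then |Q(z)| ≥ 1 for every z with |z − z₁| = r; consequently the connected component of Λ(Q) = {z : |Q(z)| < 1} containing z₁ is contained in the open ball B(z₁, r) and contains no root z_j with j ≥ 2. -/

import Mathlib

/-!
Expand `Q` in Taylor series at its root `z₁`: `Q(w) = Q'(z₁)(w - z₁) + ∑_{k ≥ 2} Q⁽ᵏ⁾(z₁)(w - z₁)ᵏ/k!`.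
On the circle `|w - z₁| = r` the linear term has modulus `|Q'(z₁)| r ≥ 2`, while by (ii) the
at most `n` higher terms together have modulus at most `|Q'(z₁)| r / 2`, so `|Q(w)| ≥ 1` there.
The component of `Λ(Q)` through `z₁` is connected and misses that circle, so it stays inside
the disc, which by (iii) contains no other root.
-/

open Polynomial Finset Nat

section Taylor

variable {𝕜 : Type*} [NontriviallyNormedField 𝕜]

theorem Polynomial.iteratedDeriv_eval (p : 𝕜[X]) (k : ℕ) :
    iteratedDeriv k (fun x => p.eval x) = fun x => (derivative^[k] p).eval x := by
  induction k generalizing p with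
  | zero => rfl
  | succ k ih =>
    rw [iteratedDeriv_succ', Function.iterate_succ_apply, ← ih]
    congr 1
    funext x
    exact Polynomial.deriv p

theorem Polynomial.taylor_coeff_eq_iteratedDeriv [CharZero 𝕜] (p : 𝕜[X]) (a : 𝕜) (k : ℕ) :
    (taylor a p).coeff k = iteratedDeriv k (fun x => p.eval x) a / k ! := by
  rw [iteratedDeriv_eval, ← factorial_smul_hasseDeriv, taylor_coeff]
  simp [nsmul_eq_mul, k.factorial_ne_zero]

theorem Polynomial.eval_eq_sum_iteratedDeriv [CharZero 𝕜] {p : 𝕜[X]} {n : ℕ}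
    (hp : p.natDegree ≤ n) (a w : 𝕜) :
    p.eval w = ∑ k ∈ range (n + 1),
      iteratedDeriv k (fun x => p.eval x) a / k ! * (w - a) ^ k := by
  rw [← sub_add_cancel w a, ← taylor_eval,
    eval_eq_sum_range' (n := n + 1) (by rw [natDegree_taylor]; omega)]
  simp only [taylor_coeff_eq_iteratedDeriv, add_sub_cancel_right]

theorem Polynomial.eval_eq_eval_add_deriv_mul_add_sum_iteratedDeriv [CharZero 𝕜]
    {p : 𝕜[X]} {n : ℕ} (hp : p.natDegree ≤ n) (a w : 𝕜) :
    p.eval w = p.eval a + deriv (fun x => p.eval x) a * (w - a) + ∑ k ∈ Icc 2 n,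
      iteratedDeriv k (fun x => p.eval x) a / k ! * (w - a) ^ k := by
  rcases n with _ | n
  · rw [eq_C_of_natDegree_le_zero hp]
    simp
  · rw [eval_eq_sum_iteratedDeriv hp a, sum_range_succ', sum_range_succ',
      ← Ico_add_one_right_eq_Icc, sum_Ico_eq_sum_range]
    simp [add_comm, add_left_comm]

end Taylor

section RCLike

variable {𝕜 : Type*} [RCLike 𝕜]

theorem Polynomial.norm_deriv_mul_sub_sum_le_norm_eval {p : 𝕜[X]} {n : ℕ}
    (hp : p.natDegree ≤ n) {a : 𝕜} (ha : p.eval a = 0) (w : 𝕜) :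
    ‖deriv (fun x => p.eval x) a‖ * ‖w - a‖ - ∑ k ∈ Icc 2 n,
      ‖iteratedDeriv k (fun x => p.eval x) a‖ * ‖w - a‖ ^ k / k ! ≤ ‖p.eval w‖ := by
  set T := ∑ k ∈ Icc 2 n, iteratedDeriv k (fun x => p.eval x) a / k ! * (w - a) ^ k
  have hT : ‖T‖ ≤ ∑ k ∈ Icc 2 n,
      ‖iteratedDeriv k (fun x => p.eval x) a‖ * ‖w - a‖ ^ k / k ! := by
    refine (norm_sum_le _ _).trans_eq (sum_congr rfl fun k _ => ?_)
    rw [norm_mul, norm_div, norm_pow, RCLike.norm_natCast, div_mul_eq_mul_div]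
  have hlin : deriv (fun x => p.eval x) a * (w - a) = p.eval w - T := by
    rw [eval_eq_eval_add_deriv_mul_add_sum_iteratedDeriv hp a w, ha]
    ring
  have := norm_sub_le (p.eval w) T
  rw [← hlin, norm_mul] at this
  linarith

theorem Polynomial.one_le_norm_eval_of_norm_sub_eq {p : 𝕜[X]} {n : ℕ}
    (hp : p.natDegree ≤ n) {a : 𝕜} (ha : p.eval a = 0) {r : ℝ}
    (h1 : 1 ≤ ‖deriv (fun x => p.eval x) a‖ * r / 2)
    (h2 : ∀ k, 2 ≤ k → k ≤ n →
      ‖iteratedDeriv k (fun x => p.eval x) a‖ * r ^ k / (k ! : ℝ) <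
        (1 / (2 * (n : ℝ) ^ 2)) * (‖deriv (fun x => p.eval x) a‖ * r))
    {w : 𝕜} (hw : ‖w - a‖ = r) : 1 ≤ ‖p.eval w‖ := by
  set A := ‖deriv (fun x => p.eval x) a‖ * r
  have hA : 2 ≤ A := by linarith
  have hsum : ∑ k ∈ Icc 2 n, ‖iteratedDeriv k (fun x => p.eval x) a‖ * r ^ k / k !
      ≤ A / 2 :=
    calc _ ≤ #(Icc 2 n) • ((1 / (2 * (n : ℝ) ^ 2)) * A) :=
          sum_le_card_nsmul _ _ _ fun k hk => (h2 k (mem_Icc.1 hk).1 (mem_Icc.1 hk).2).le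
      _ ≤ n * ((1 / (2 * (n : ℝ) ^ 2)) * A) := by
          rw [nsmul_eq_mul]
          refine mul_le_mul_of_nonneg_right ?_ (mul_nonneg (by positivity) (by linarith))
          exact_mod_cast (Nat.card_Icc 2 n).trans_le (by omega)
      _ ≤ A / 2 := by
          rcases n.eq_zero_or_pos with rfl | hn
          · simp only [CharP.cast_eq_zero, zero_mul]
            linarith
          · have hn : (1 : ℝ) ≤ n := by exact_mod_cast hn
            rw [show (n : ℝ) * (1 / (2 * n ^ 2) * A) = A / 2 / n by field_simp]
            exact div_le_self (by linarith) hn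
  have := norm_deriv_mul_sub_sum_le_norm_eval hp ha w
  rw [hw] at this
  linarith

end RCLike

theorem connectedComponentIn_subset_ball_of_disjoint_sphere {X : Type*} [PseudoMetricSpace X]
    {S : Set X} {x : X} {r : ℝ} (hr : 0 < r) (hS : Disjoint S (Metric.sphere x r)) :
    connectedComponentIn S x ⊆ Metric.ball x r := by
  by_cases hx : x ∈ S
  swap
  · simp [connectedComponentIn_eq_empty hx]
  have hsplit : connectedComponentIn S x ⊆ Metric.ball x r ∪ (Metric.closedBall x r)ᶜ :=
    fun y hy => (lt_or_gt_of_ne (Set.disjoint_left.1 hS (connectedComponentIn_subset S x hy))).imp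
      id not_le.2
  exact isPreconnected_connectedComponentIn.subset_left_of_subset_union Metric.isOpen_ball
    Metric.isClosed_closedBall.isOpen_compl
    (disjoint_compl_right.mono_left Metric.ball_subset_closedBall) hsplit
    ⟨x, mem_connectedComponentIn hx, Metric.mem_ball_self hr⟩

theorem isolated_component_criterion
    (n : ℕ) (hn : 2 ≤ n) (z : ℕ → ℂ) (r : ℝ) (hr : 0 < r)
    (Q : ℂ → ℂ) (hQ : Q = fun w => ∏ i ∈ Finset.Icc 1 n, (w - z i))
    (h1 : 1 ≤ ‖deriv Q (z 1)‖ * r / 2)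
    (h2 : ∀ k, 2 ≤ k → k ≤ n →
      ‖iteratedDeriv k Q (z 1)‖ * r ^ k / (Nat.factorial k : ℝ) <
        (1 / (2 * (n : ℝ) ^ 2)) * (‖deriv Q (z 1)‖ * r))
    (h3 : ∀ j, 2 ≤ j → j ≤ n → r < ‖z 1 - z j‖) :
    (∀ w : ℂ, ‖w - z 1‖ = r → 1 ≤ ‖Q w‖) ∧
    connectedComponentIn {w : ℂ | ‖Q w‖ < 1} (z 1) ⊆ Metric.ball (z 1) r ∧
    ∀ j, 2 ≤ j → j ≤ n →
      z j ∉ connectedComponentIn {w : ℂ | ‖Q w‖ < 1} (z 1) := by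
  set P : ℂ[X] := ∏ i ∈ Icc 1 n, (X - C (z i))
  obtain rfl : Q = fun w => P.eval w := by
    rw [hQ]
    simp [P, eval_prod]
  have hdeg : P.natDegree ≤ n := by
    simp [P, natDegree_prod_of_monic _ _ fun i _ => monic_X_sub_C (z i)]
  have hroot : P.eval (z 1) = 0 := by
    simp only [P, eval_prod, eval_sub, eval_X, eval_C]
    exact prod_eq_zero (mem_Icc.2 ⟨le_rfl, by omega⟩) (sub_self _)
  have hsphere : ∀ w : ℂ, ‖w - z 1‖ = r → 1 ≤ ‖P.eval w‖ :=
    fun w => one_le_norm_eval_of_norm_sub_eq hdeg hroot h1 h2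
  have hball := connectedComponentIn_subset_ball_of_disjoint_sphere
    (S := {w : ℂ | ‖P.eval w‖ < 1}) hr (Set.disjoint_left.2 fun w (hw : ‖P.eval w‖ < 1) hw' =>
      (hsphere w (mem_sphere_iff_norm.1 hw')).not_gt hw)
  exact ⟨hsphere, hball, fun j hj2 hjn hj =>
    (h3 j hj2 hjn).not_gt (mem_ball_iff_norm'.1 (hball hj))⟩
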